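/- arXiv:1408.5652 — 7 statements merged into one kernel-verified Lean document; each statement's English description precedes it below -/
import Mathlib

section
/- For every positive integer j and nonnegative integer m, the double sequence A_{j,m} defined by A_{-1,0}=1, A_{-1,m}=0 for m≥1, A_{j,-1}=0 for j≥0, and A_{j,m} = j·A_{j,m-1} + A_{j-1,m} for j,m ≥ 0, satisfies the closed formula A_{j,m} = Σ_{r=1}^{j} (-1)^{j-r} r^{m+j} / (r! (j-r)!). -/
/-!
`A j m` is the Stirling number of the second kind `S(m + j, j)`: substituting `n = m + j`, the
recurrence for `A` becomes `S(n + 1, k + 1) = (k + 1) S(n, k + 1) + S(n, k)`. The classical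
explicit formula `S(n, k) = ∑_{r ≤ k} (-1)^(k-r) r^n / (r! (k-r)!)` follows because the sum
satisfies the same recurrence (the factor `r - (k + 1)` cancels against `(k + 1 - r)!`) and
the same boundary values (at `n = 0` it is `(1 - 1)^k / k!` by the binomial theorem). For
`m + j ≥ 1` the term `r = 0` vanishes.
-/

open Finset Nat

section
variable (K : Type*) [Field K] [CharZero K]

def stirlingSecondSum (n k : ℕ) : K :=
  ∑ r ∈ range (k + 1), (-1 : K) ^ (k - r) * (r : K) ^ n / ((r ! : K) * ((k - r)! : K))

lemma stirlingSecondSum_zero_right (n : ℕ) : stirlingSecondSum K n 0 = 0 ^ n := by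
  simp [stirlingSecondSum]

lemma stirlingSecondSum_zero_left (k : ℕ) : stirlingSecondSum K 0 k = 0 ^ k / k ! := by
  have hterm : ∀ r ∈ range (k + 1), (-1 : K) ^ (k - r) * (r : K) ^ 0 / ((r ! : K) * ((k - r)! : K))
      = 1 ^ r * (-1 : K) ^ (k - r) * (k.choose r : K) / k ! := by
    intro r hr
    have hk : (k ! : K) ≠ 0 := Nat.cast_ne_zero.mpr (factorial_ne_zero k)
    rw [Nat.cast_choose K (Nat.lt_succ_iff.mp (mem_range.mp hr)), one_pow, pow_zero]
    field_simp
  rw [stirlingSecondSum, sum_congr rfl hterm, ← sum_div, ← add_pow, add_neg_cancel]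

lemma stirlingSecondSum_succ_succ (n k : ℕ) :
    stirlingSecondSum K (n + 1) (k + 1) =
      (k + 1) * stirlingSecondSum K n (k + 1) + stirlingSecondSum K n k := by
  rw [← sub_eq_iff_eq_add', stirlingSecondSum, stirlingSecondSum, mul_sum, ← sum_sub_distrib,
    sum_range_succ, Nat.sub_self]
  have hlast : (-1 : K) ^ 0 * ((k + 1 : ℕ) : K) ^ (n + 1) / ((k + 1)! * (0 ! : K)) -
      (k + 1) * ((-1) ^ 0 * ((k + 1 : ℕ) : K) ^ n / ((k + 1)! * (0 ! : K))) = 0 := by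
    push_cast
    ring
  rw [hlast, add_zero, stirlingSecondSum]
  refine sum_congr rfl fun r hr => ?_
  obtain ⟨a, rfl⟩ := Nat.exists_eq_add_of_le (Nat.lt_succ_iff.mp (mem_range.mp hr))
  have hr : (r ! : K) ≠ 0 := Nat.cast_ne_zero.mpr (factorial_ne_zero r)
  have ha : (a ! : K) ≠ 0 := Nat.cast_ne_zero.mpr (factorial_ne_zero a)
  have ha' : (a + 1 : K) ≠ 0 := Nat.cast_add_one_ne_zero a
  rw [show r + a + 1 - r = a + 1 by omega, Nat.add_sub_cancel_left, factorial_succ]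
  push_cast
  field_simp
  ring

theorem Nat.cast_stirlingSecond_eq_stirlingSecondSum (n k : ℕ) :
    (stirlingSecond n k : K) = stirlingSecondSum K n k := by
  induction n generalizing k with
  | zero => cases k <;> simp [stirlingSecondSum_zero_left]
  | succ n ih =>
    cases k with
    | zero => simp [stirlingSecondSum_zero_right]
    | succ k =>
      rw [stirlingSecond_succ_succ, stirlingSecondSum_succ_succ, ← ih, ← ih]
      push_cast
      ring

lemma stirlingSecondSum_eq_sum_Icc {n : ℕ} (hn : n ≠ 0) (k : ℕ) :
    stirlingSecondSum K n k =
      ∑ r ∈ Icc 1 k, (-1 : K) ^ (k - r) * (r : K) ^ n / ((r ! : K) * ((k - r)! : K)) := by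
  rw [stirlingSecondSum, range_eq_Ico, sum_eq_sum_Ico_succ_bot k.succ_pos, zero_add,
    succ_eq_add_one, Ico_add_one_right_eq_Icc]
  simp [zero_pow hn]

end

lemma eq_stirlingSecond_of_recurrence {R : Type*} [Ring R] (A : ℤ → ℤ → R)
    (h1 : A (-1) 0 = 1) (h2 : ∀ m : ℤ, 1 ≤ m → A (-1) m = 0)
    (h3 : ∀ j : ℤ, 0 ≤ j → A j (-1) = 0)
    (h4 : ∀ j m : ℤ, 0 ≤ j → 0 ≤ m → A j m = j * A j (m - 1) + A (j - 1) m) (j m : ℕ) :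
    A j m = stirlingSecond (m + j) j := by
  induction j generalizing m with
  | zero =>
    have h := h4 0 m le_rfl m.cast_nonneg
    rw [Int.cast_zero, zero_mul, zero_add, zero_sub] at h
    cases m with
    | zero => simpa [h1] using h
    | succ m => simpa [h2 (m + 1) (by omega)] using h
  | succ j ih =>
    induction m with
    | zero =>
      have h := h4 (j + 1) 0 (by omega) le_rfl
      rw [zero_sub, h3 (j + 1) (by omega), mul_zero, zero_add, add_sub_cancel_right] at h
      have hj := ih 0
      push_cast at h hj ⊢
      rw [h, hj, zero_add, zero_add, stirlingSecond_self, stirlingSecond_self]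
    | succ m ihm =>
      have h := h4 (j + 1) (m + 1) (by omega) (by omega)
      rw [add_sub_cancel_right, add_sub_cancel_right] at h
      have hj := ih (m + 1)
      push_cast at h hj ihm ⊢
      rw [h, ihm, hj, show m + 1 + (j + 1) = (m + (j + 1)) + 1 by omega, stirlingSecond_succ_succ,
        show m + (j + 1) = m + 1 + j by omega]
      norm_cast

/-- closed formula for the double sequence `A`. -/
theorem stmt0 (A : ℤ → ℤ → ℚ)
    (h1 : A (-1) 0 = 1)
    (h2 : ∀ m : ℤ, 1 ≤ m → A (-1) m = 0)
    (h3 : ∀ j : ℤ, 0 ≤ j → A j (-1) = 0)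
    (h4 : ∀ j m : ℤ, 0 ≤ j → 0 ≤ m → A j m = j * A j (m - 1) + A (j - 1) m)
    (j m : ℕ) (hj : 1 ≤ j) :
    A j m = ∑ r ∈ Finset.Icc 1 j,
      (-1 : ℚ) ^ (j - r) * (r : ℚ) ^ (m + j) / ((r.factorial : ℚ) * ((j - r).factorial : ℚ)) := by
  rw [eq_stirlingSecond_of_recurrence A h1 h2 h3 h4, Nat.cast_stirlingSecond_eq_stirlingSecondSum,
    stirlingSecondSum_eq_sum_Icc ℚ (by omega)]
end

section
/- Let Λ = (Λ_0, Λ_1, Λ_2, ...) be a sequence of complex numbers. Define U_{k,j}(Λ) for k,j ≥ -1 by U_{-1,-1}=1, U_{k,-1}=U_{-1,j}=0 for k,j≥0, and U_{k,j} = -(Λ_j + k - 1)·U_{k-1,j} + U_{k-1,j-1} for k,j ≥ 0. Define V_{k,j}(Λ) by V_{k,j}=0 if j>k and V_{k,j} = Σ_{m=0}^{k-j} A_{j,k-j-m}·σ_{k-1,m}(Λ) if k ≥ j, where σ_{k,m}(Λ) is the elementary symmetric polynomial in Λ_0,...,Λ_k of degree m (with σ_{-1,0}=1, σ_{k,-1}=σ_{-1,m}=0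 for m≥1) and A_{j,m} is as in Definition (A). Then for all k ≥ 0 and j ≥ -1 with k ≥ j, Σ_{ℓ=j}^{k} U_{k,ℓ}(Λ)·V_{ℓ,j}(Λ) = δ_{k,j} (Kronecker delta). -/
/-!
`V_{k,j}` is the coefficient of `x^(k-j)` in the product of the generating series of `A_{j,·}`
and `σ_{k-1,·}`. Since `σ_k(x) = (1 + Λ_k x) σ_{k-1}(x)` and `A_j(x) = j x A_j(x) + A_{j-1}(x)`,
the columns of `V` satisfy `V_{l+1,j} = (Λ_l + j) V_{l,j} + V_{l,j-1}`. Combined with the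
recurrence of `U`, this gives `S_{k+1,j} = (j - k) S_{k,j} + S_{k,j-1}` for
`S_{k,j} = ∑_ℓ U_{k,ℓ} V_{ℓ,j}`; as `U` and `V` are unitriangular and `S_{k,-1} = 0`,
induction on `k` yields `S_{k,j} = δ_{k,j}`.
-/

open Finset

namespace Finset

variable {M : Type*} [AddCommMonoid M]

theorem sum_Icc_add' (f : ℤ → M) (a b c : ℤ) :
    ∑ x ∈ Icc a b, f (x + c) = ∑ x ∈ Icc (a + c) (b + c), f x := by
  rw [← map_add_right_Icc, sum_map]
  rfl

theorem sum_Icc_sub_one_left (f : ℤ → M) {a b : ℤ} (h : a - 1 ≤ b) :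
    ∑ x ∈ Icc (a - 1) b, f x = f (a - 1) + ∑ x ∈ Icc a b, f x := by
  rw [← insert_Icc_left_eq_Icc_sub_one h, sum_insert (by simp)]

theorem sum_Icc_add_one_right (f : ℤ → M) {a b : ℤ} (h : a ≤ b + 1) :
    ∑ x ∈ Icc a (b + 1), f x = ∑ x ∈ Icc a b, f x + f (b + 1) := by
  rw [← insert_Icc_right_eq_Icc_add_one h, sum_insert (by simp), add_comm]

end Finset

theorem Int.eq_of_forall_eq_sub_one {α : Type*} {f : ℤ → α} {a : ℤ}
    (h : ∀ n, a < n → f n = f (n - 1)) : ∀ n, a ≤ n → f n = f a := by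
  intro n hn
  induction n, hn using Int.leInduction with
  | base => rfl
  | succ n hn ih => rw [h (n + 1) (by omega), add_sub_cancel_right, ih]

theorem eq_zero_of_pascal_rec {R : Type*} [NonUnitalNonAssocSemiring R] {X a b : ℤ → ℤ → R}
    {s : ℤ} (hs : -1 ≤ s) (hinit : ∀ m, s < m → X (-1) m = 0)
    (hrec : ∀ k m, 0 ≤ k → 0 ≤ m → X k m = a k m * X (k - 1) m + b k m * X (k - 1) (m - 1)) :
    ∀ k, -1 ≤ k → ∀ m, k + s + 1 < m → X k m = 0 := by
  intro k hk
  induction k, hk using Int.leInduction with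
  | base => exact fun m hm => hinit m (by omega)
  | succ k hk ih =>
    intro m hm
    rw [hrec (k + 1) m (by omega) (by omega), add_sub_cancel_right, ih m (by omega),
      ih (m - 1) (by omega), mul_zero, mul_zero, add_zero]

section CauchyProd

variable {R : Type*} [CommSemiring R]

noncomputable def cauchyProd (a b : ℤ → R) (n : ℤ) : R := ∑ m ∈ Icc 0 n, a (n - m) * b m

theorem cauchyProd_succ_of_right_rec {a b b' b'' : ℤ → R} {c : R} {n : ℤ} (hn : 0 ≤ n)
    (hb : ∀ m, 0 ≤ m → b m = c * b' (m - 1) + b'' m) (hb' : b' (-1) = 0) :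
    cauchyProd a b (n + 1) = c * cauchyProd a b' n + cauchyProd a b'' (n + 1) := by
  have hshift : ∑ m ∈ Icc 0 (n + 1), a (n + 1 - m) * b' (m - 1) = cauchyProd a b' n := by
    calc ∑ m ∈ Icc 0 (n + 1), a (n + 1 - m) * b' (m - 1)
        = ∑ m ∈ Icc 0 (n + 1), a (n - (m + -1)) * b' (m + -1) :=
          sum_congr rfl fun m _ => by ring_nf
      _ = ∑ m ∈ Icc (0 + -1) (n + 1 + -1), a (n - m) * b' m :=
          sum_Icc_add' (fun m => a (n - m) * b' m) _ _ _
      _ = cauchyProd a b' n := by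
          rw [add_neg_cancel_right, ← sub_eq_add_neg, sum_Icc_sub_one_left _ (by omega), zero_sub,
            hb', mul_zero, zero_add, cauchyProd]
  rw [← hshift, mul_sum, cauchyProd, cauchyProd, ← sum_add_distrib]
  refine sum_congr rfl fun m hm => ?_
  rw [hb m (mem_Icc.1 hm).1]
  ring

theorem cauchyProd_succ_of_left_rec {a a' a'' b : ℤ → R} {c : R} {n : ℤ} (hn : 0 ≤ n)
    (ha : ∀ m, 0 ≤ m → a m = c * a' (m - 1) + a'' m) (ha' : a' (-1) = 0) :
    cauchyProd a b (n + 1) = c * cauchyProd a' b n + cauchyProd a'' b (n + 1) := by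
  have htop : ∑ m ∈ Icc 0 (n + 1), a' (n + 1 - m - 1) * b m = cauchyProd a' b n := by
    rw [sum_Icc_add_one_right _ (by omega), sub_self, zero_sub, ha', zero_mul, add_zero,
      cauchyProd]
    exact sum_congr rfl fun m _ => by rw [show n + 1 - m - 1 = n - m by ring]
  rw [← htop, mul_sum, cauchyProd, cauchyProd, ← sum_add_distrib]
  refine sum_congr rfl fun m hm => ?_
  rw [ha (n + 1 - m) (by linarith [(mem_Icc.1 hm).2])]
  ring

end CauchyProd

section Tables

variable {R : Type*} [CommRing R]

structure IsATable (A : ℤ → ℤ → R) : Prop where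
  neg_one_zero : A (-1) 0 = 1
  neg_one_left : ∀ m : ℤ, 1 ≤ m → A (-1) m = 0
  neg_one_right : ∀ j : ℤ, 0 ≤ j → A j (-1) = 0
  step : ∀ j m : ℤ, 0 ≤ j → 0 ≤ m → A j m = j * A j (m - 1) + A (j - 1) m

structure IsSymmTable (Λ : ℤ → R) (σ : ℤ → ℤ → R) : Prop where
  neg_one_zero : σ (-1) 0 = 1
  neg_one_right : ∀ k : ℤ, -1 ≤ k → σ k (-1) = 0
  neg_one_left : ∀ m : ℤ, 1 ≤ m → σ (-1) m = 0
  step : ∀ k m : ℤ, 0 ≤ k → 0 ≤ m → σ k m = Λ k * σ (k - 1) (m - 1) + σ (k - 1) m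

structure IsUTable (Λ : ℤ → R) (U : ℤ → ℤ → R) : Prop where
  neg_one_neg_one : U (-1) (-1) = 1
  neg_one_right : ∀ k : ℤ, 0 ≤ k → U k (-1) = 0
  neg_one_left : ∀ j : ℤ, 0 ≤ j → U (-1) j = 0
  step : ∀ k j : ℤ, 0 ≤ k → 0 ≤ j → U k j = -(Λ j + k - 1) * U (k - 1) j + U (k - 1) (j - 1)

variable {Λ : ℤ → R} {A σ U V : ℤ → ℤ → R}

theorem IsATable.apply_zero (hA : IsATable A) {j : ℤ} (hj : -1 ≤ j) : A j 0 = 1 := by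
  refine (Int.eq_of_forall_eq_sub_one (f := fun j => A j 0) (fun j hj => ?_) j hj).trans
    hA.neg_one_zero
  rw [hA.step j 0 (by omega) le_rfl, zero_sub, hA.neg_one_right j (by omega), mul_zero, zero_add]

theorem IsSymmTable.apply_zero (hσ : IsSymmTable Λ σ) {k : ℤ} (hk : -1 ≤ k) : σ k 0 = 1 := by
  refine (Int.eq_of_forall_eq_sub_one (f := fun k => σ k 0) (fun k hk => ?_) k hk).trans
    hσ.neg_one_zero
  rw [hσ.step k 0 (by omega) le_rfl, zero_sub, hσ.neg_one_right (k - 1) (by omega), mul_zero,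
    zero_add]

theorem IsSymmTable.eq_zero_of_lt (hσ : IsSymmTable Λ σ) {k m : ℤ} (hk : -1 ≤ k)
    (hm : k + 1 < m) : σ k m = 0 :=
  eq_zero_of_pascal_rec (s := 0) (a := fun _ _ => 1) (b := fun k _ => Λ k) (by norm_num)
    (fun m hm => hσ.neg_one_left m hm)
    (fun k m hk hm => by rw [hσ.step k m hk hm, one_mul, add_comm]) k hk m (by omega)

theorem IsUTable.eq_zero_of_lt (hU : IsUTable Λ U) {k j : ℤ} (hk : -1 ≤ k) (hj : k < j) :
    U k j = 0 :=
  eq_zero_of_pascal_rec (s := -1) (a := fun k j => -(Λ j + k - 1)) (b := fun _ _ => 1) le_rfl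
    (fun j hj => hU.neg_one_left j hj)
    (fun k j hk hj => by rw [hU.step k j hk hj, one_mul]) k hk j (by omega)

theorem IsUTable.apply_self (hU : IsUTable Λ U) {k : ℤ} (hk : -1 ≤ k) : U k k = 1 := by
  refine (Int.eq_of_forall_eq_sub_one (f := fun k => U k k) (fun k hk => ?_) k hk).trans
    hU.neg_one_neg_one
  rw [hU.step k k (by omega) (by omega), hU.eq_zero_of_lt (by omega) (by omega), mul_zero,
    zero_add]

structure IsVTable (A σ V : ℤ → ℤ → R) : Prop where
  eq_cauchyProd : ∀ k j : ℤ, 0 ≤ k → -1 ≤ j → j ≤ k →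
    V k j = cauchyProd (A j) (σ (k - 1)) (k - j)

theorem IsVTable.apply_self (hV : IsVTable A σ V) (hA : IsATable A) (hσ : IsSymmTable Λ σ)
    {k : ℤ} (hk : 0 ≤ k) : V k k = 1 := by
  rw [hV.eq_cauchyProd k k hk (by omega) le_rfl, sub_self, cauchyProd, Icc_self, sum_singleton,
    sub_self, hA.apply_zero (by omega), hσ.apply_zero (by omega), mul_one]

theorem IsVTable.apply_neg_one (hV : IsVTable A σ V) (hA : IsATable A) (hσ : IsSymmTable Λ σ)
    {l : ℤ} (hl : 0 ≤ l) : V l (-1) = 0 := by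
  rw [hV.eq_cauchyProd l (-1) hl le_rfl (by omega), cauchyProd]
  refine sum_eq_zero fun m hm => ?_
  obtain ⟨hm0, hml⟩ := mem_Icc.1 hm
  obtain hm | rfl := lt_or_eq_of_le hml
  · rw [hA.neg_one_left _ (by omega), zero_mul]
  · rw [hσ.eq_zero_of_lt (by omega) (by omega), mul_zero]

theorem IsVTable.apply_succ (hV : IsVTable A σ V) (hA : IsATable A) (hσ : IsSymmTable Λ σ)
    {l j : ℤ} (hj : 0 ≤ j) (hjl : j ≤ l) :
    V (l + 1) j = (Λ l + j) * V l j + V l (j - 1) := by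
  rw [hV.eq_cauchyProd (l + 1) j (by omega) (by omega) (by omega), add_sub_cancel_right,
    add_sub_right_comm,
    cauchyProd_succ_of_right_rec (by omega) (hσ.step l · (by omega))
      (hσ.neg_one_right _ (by omega)),
    cauchyProd_succ_of_left_rec (by omega) (hA.step j · hj) (hA.neg_one_right j hj),
    hV.eq_cauchyProd l j (by omega) (by omega) hjl,
    hV.eq_cauchyProd l (j - 1) (by omega) (by omega) (by omega),
    show l - (j - 1) = l - j + 1 by ring]
  ring

theorem IsUTable.sum_mul_neg_one (hU : IsUTable Λ U) (hV : ∀ l : ℤ, 0 ≤ l → V l (-1) = 0)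
    {k : ℤ} (hk : 0 ≤ k) : ∑ l ∈ Icc (-1) k, U k l * V l (-1) = 0 :=
  sum_eq_zero fun l hl => by
    obtain rfl | hl := eq_or_lt_of_le (mem_Icc.1 hl).1
    · rw [hU.neg_one_right k hk, zero_mul]
    · rw [hV l (by omega), mul_zero]

theorem IsUTable.sum_mul_self (hU : IsUTable Λ U) (hV : ∀ k : ℤ, 0 ≤ k → V k k = 1)
    {k : ℤ} (hk : 0 ≤ k) : ∑ l ∈ Icc k k, U k l * V l k = 1 := by
  rw [Icc_self, sum_singleton, hU.apply_self (by omega), hV k hk, mul_one]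

theorem IsUTable.sum_mul_succ (hU : IsUTable Λ U) (hVself : ∀ k : ℤ, 0 ≤ k → V k k = 1)
    (hVsucc : ∀ l j : ℤ, 0 ≤ j → j ≤ l → V (l + 1) j = (Λ l + j) * V l j + V l (j - 1))
    {k j : ℤ} (hj : 0 ≤ j) (hjk : j ≤ k) :
    ∑ l ∈ Icc j (k + 1), U (k + 1) l * V l j =
      (j - k) * ∑ l ∈ Icc j k, U k l * V l j + ∑ l ∈ Icc (j - 1) k, U k l * V l (j - 1) := by
  have hexpand : ∀ l ∈ Icc j (k + 1),
      U (k + 1) l * V l j = -(Λ l + k) * (U k l * V l j) + U k (l - 1) * V l j := by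
    intro l hl
    rw [hU.step (k + 1) l (by omega) (by linarith [(mem_Icc.1 hl).1]), add_sub_cancel_right]
    push_cast
    ring
  have hshift : ∑ l ∈ Icc j (k + 1), U k (l - 1) * V l j
      = ∑ l ∈ Icc (j - 1) k, U k l * V (l + 1) j := by
    calc ∑ l ∈ Icc j (k + 1), U k (l - 1) * V l j
        = ∑ l ∈ Icc j (k + 1), U k (l + -1) * V (l + -1 + 1) j :=
          sum_congr rfl fun l _ => by rw [← sub_eq_add_neg, sub_add_cancel]
      _ = ∑ l ∈ Icc (j + -1) (k + 1 + -1), U k l * V (l + 1) j :=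
          sum_Icc_add' (fun l => U k l * V (l + 1) j) _ _ _
      _ = ∑ l ∈ Icc (j - 1) k, U k l * V (l + 1) j := by
          rw [add_neg_cancel_right, ← sub_eq_add_neg]
  have hcorner : U k (j - 1) * V (j - 1 + 1) j = U k (j - 1) * V (j - 1) (j - 1) := by
    obtain rfl | hj := eq_or_lt_of_le hj
    · rw [zero_sub, hU.neg_one_right k (by omega), zero_mul, zero_mul]
    · rw [sub_add_cancel, hVself j hj.le, hVself (j - 1) (by omega)]
  have hcol : ∀ l ∈ Icc j k,
      U k l * V (l + 1) j = (Λ l + j) * (U k l * V l j) + U k l * V l (j - 1) := by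
    intro l hl
    rw [hVsucc l j hj (mem_Icc.1 hl).1]
    ring
  rw [sum_congr rfl hexpand, sum_add_distrib, sum_Icc_add_one_right _ (by omega),
    hU.eq_zero_of_lt (by omega) (lt_add_one k), zero_mul, mul_zero, add_zero, hshift,
    sum_Icc_sub_one_left _ (by omega), sum_Icc_sub_one_left _ (by omega), hcorner,
    sum_congr rfl hcol, sum_add_distrib]
  have hdiff : ∑ l ∈ Icc j k, -(Λ l + k) * (U k l * V l j) +
      ∑ l ∈ Icc j k, (Λ l + j) * (U k l * V l j) = (j - k) * ∑ l ∈ Icc j k, U k l * V l j := by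
    rw [mul_sum, ← sum_add_distrib]
    exact sum_congr rfl fun l _ => by ring
  linear_combination hdiff

end Tables

theorem eq_ite_of_rec {R : Type*} [CommRing R] {S : ℤ → ℤ → R}
    (hneg : ∀ k : ℤ, 0 ≤ k → S k (-1) = 0) (hdiag : ∀ k : ℤ, 0 ≤ k → S k k = 1)
    (hrec : ∀ k j : ℤ, 0 ≤ j → j ≤ k → S (k + 1) j = (j - k) * S k j + S k (j - 1))
    {k : ℤ} (hk : 0 ≤ k) : ∀ j : ℤ, -1 ≤ j → j ≤ k → S k j = if k = j then 1 else 0 := by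
  induction k, hk using Int.leInduction with
  | base =>
    intro j hj hj0
    obtain rfl | rfl : j = -1 ∨ j = 0 := by omega
    · rw [hneg 0 le_rfl, if_neg (by norm_num)]
    · rw [hdiag 0 le_rfl, if_pos rfl]
  | succ k hk ih =>
    intro j hj hjk
    obtain rfl | hj := eq_or_lt_of_le hj
    · rw [hneg _ (by omega), if_neg (by omega)]
    obtain rfl | hjk := eq_or_lt_of_le hjk
    · rw [hdiag _ (by omega), if_pos rfl]
    rw [hrec k j (by omega) (by omega), ih j (by omega) (by omega),
      ih (j - 1) (by omega) (by omega), if_neg (by omega : k ≠ j - 1),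
      if_neg (by omega : k + 1 ≠ j)]
    split_ifs with h
    · rw [h, sub_self, zero_mul, add_zero]
    · rw [mul_zero, add_zero]

theorem stmt2_general (Λ : ℤ → ℂ) (A U σ V : ℤ → ℤ → ℂ)
    (hA1 : A (-1) 0 = 1)
    (hA2 : ∀ m : ℤ, 1 ≤ m → A (-1) m = 0)
    (hA3 : ∀ j : ℤ, 0 ≤ j → A j (-1) = 0)
    (hA4 : ∀ j m : ℤ, 0 ≤ j → 0 ≤ m → A j m = j * A j (m - 1) + A (j - 1) m)
    (hU1 : U (-1) (-1) = 1)
    (hU2 : ∀ k : ℤ, 0 ≤ k → U k (-1) = 0)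
    (hU3 : ∀ j : ℤ, 0 ≤ j → U (-1) j = 0)
    (hU4 : ∀ k j : ℤ, 0 ≤ k → 0 ≤ j →
      U k j = -(Λ j + k - 1) * U (k - 1) j + U (k - 1) (j - 1))
    (hσ1 : σ (-1) 0 = 1)
    (hσ2 : ∀ k : ℤ, -1 ≤ k → σ k (-1) = 0)
    (hσ3 : ∀ m : ℤ, 1 ≤ m → σ (-1) m = 0)
    (hσ4 : ∀ k m : ℤ, 0 ≤ k → 0 ≤ m → σ k m = Λ k * σ (k - 1) (m - 1) + σ (k - 1) m)
    (hV2 : ∀ k j : ℤ, 0 ≤ k → -1 ≤ j → j ≤ k →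
      V k j = ∑ m ∈ Finset.Icc 0 (k - j), A j (k - j - m) * σ (k - 1) m)
    (k j : ℤ) (hk : 0 ≤ k) (hj : -1 ≤ j) (hjk : j ≤ k) :
    ∑ l ∈ Finset.Icc j k, U k l * V l j = if k = j then 1 else 0 := by
  have hA : IsATable A := ⟨hA1, hA2, hA3, hA4⟩
  have hσ : IsSymmTable Λ σ := ⟨hσ1, hσ2, hσ3, hσ4⟩
  have hU : IsUTable Λ U := ⟨hU1, hU2, hU3, hU4⟩
  have hV : IsVTable A σ V := ⟨hV2⟩
  have hVself : ∀ k : ℤ, 0 ≤ k → V k k = 1 := fun _ => hV.apply_self hA hσ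
  have hVsucc : ∀ l j : ℤ, 0 ≤ j → j ≤ l → V (l + 1) j = (Λ l + j) * V l j + V l (j - 1) :=
    fun _ _ => hV.apply_succ hA hσ
  exact eq_ite_of_rec (S := fun k j => ∑ l ∈ Icc j k, U k l * V l j)
    (fun _ => hU.sum_mul_neg_one fun _ => hV.apply_neg_one hA hσ)
    (fun _ => hU.sum_mul_self hVself) (fun _ _ => hU.sum_mul_succ hVself hVsucc) hk j hj hjk

/-- orthogonality `∑_{ℓ=j}^{k} U_{k,ℓ} V_{ℓ,j} = δ_{k,j}`. -/
theorem stmt2 (Λ : ℤ → ℂ) (A U σ V : ℤ → ℤ → ℂ)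
    (hA1 : A (-1) 0 = 1)
    (hA2 : ∀ m : ℤ, 1 ≤ m → A (-1) m = 0)
    (hA3 : ∀ j : ℤ, 0 ≤ j → A j (-1) = 0)
    (hA4 : ∀ j m : ℤ, 0 ≤ j → 0 ≤ m → A j m = j * A j (m - 1) + A (j - 1) m)
    (hU1 : U (-1) (-1) = 1)
    (hU2 : ∀ k : ℤ, 0 ≤ k → U k (-1) = 0)
    (hU3 : ∀ j : ℤ, 0 ≤ j → U (-1) j = 0)
    (hU4 : ∀ k j : ℤ, 0 ≤ k → 0 ≤ j →
      U k j = -(Λ j + k - 1) * U (k - 1) j + U (k - 1) (j - 1))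
    (hσ1 : σ (-1) 0 = 1)
    (hσ2 : ∀ k : ℤ, -1 ≤ k → σ k (-1) = 0)
    (hσ3 : ∀ m : ℤ, 1 ≤ m → σ (-1) m = 0)
    (hσ4 : ∀ k m : ℤ, 0 ≤ k → 0 ≤ m → σ k m = Λ k * σ (k - 1) (m - 1) + σ (k - 1) m)
    (hV1 : ∀ k j : ℤ, k < j → V k j = 0)
    (hV2 : ∀ k j : ℤ, 0 ≤ k → -1 ≤ j → j ≤ k →
      V k j = ∑ m ∈ Finset.Icc 0 (k - j), A j (k - j - m) * σ (k - 1) m)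
    (k j : ℤ) (hk : 0 ≤ k) (hj : -1 ≤ j) (hjk : j ≤ k) :
    ∑ l ∈ Finset.Icc j k, U k l * V l j = if k = j then 1 else 0 :=
  stmt2_general Λ A U σ V hA1 hA2 hA3 hA4 hU1 hU2 hU3 hU4 hσ1 hσ2 hσ3 hσ4 hV2 k j hk hj hjk
end

section
/- With V_{k,j}(Λ) defined as V_{k,j}=0 for j>k and V_{k,j}(Λ) = Σ_{m=0}^{k-j} A_{j,k-j-m}·σ_{k-1,m}(Λ) for k ≥ j, the recurrence V_{k,j}(Λ) = (Λ_{k-1} + j)·V_{k-1,j}(Λ) + V_{k-1,j-1}(Λ) holds for all k ≥ 1, j ≥ 0. -/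
/-!
Both `V_{k,j}` and the recurrences for `A` and `σ` are statements about the truncated
convolution `(f ⋆ g)(n) = ∑_{a+b=n, a,b ≥ 0} f a · g b`: here `V_{k,j} = (A_j ⋆ σ_{k-1})(k-j)`,
also for `k < j`, where the sum is empty. A recurrence `g m = c · g' (m-1) + g'' m` with
`g' (-1) = 0` passes to the convolution as `f ⋆ g = c · (f ⋆ g')(· - 1) + f ⋆ g''`; applying this
to `σ_{k-1} = Λ_{k-1} σ_{k-2}(· - 1) + σ_{k-2}` and, by commutativity, to
`A_j = j · A_j(· - 1) + A_{j-1}` gives the recurrence for `V`.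
-/

open Finset

variable {R : Type*} [CommRing R]

noncomputable def truncConv (f g : ℤ → R) (n : ℤ) : R := ∑ m ∈ Icc 0 n, f (n - m) * g m

lemma truncConv_of_neg (f g : ℤ → R) {n : ℤ} (hn : n < 0) : truncConv f g n = 0 := by
  simp [truncConv, Icc_eq_empty_of_lt hn]

lemma truncConv_comm (f g : ℤ → R) (n : ℤ) : truncConv f g n = truncConv g f n := by
  refine sum_nbij' (n - ·) (n - ·) (fun m hm => ?_) (fun m hm => ?_)
    (fun m _ => sub_sub_cancel n m) (fun m _ => sub_sub_cancel n m)
    (fun m _ => by rw [sub_sub_cancel, mul_comm])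
  all_goals simp only [mem_Icc] at hm ⊢; omega

lemma sum_Icc_mul_shift (f g : ℤ → R) (n : ℤ) (hg : g (-1) = 0) :
    ∑ m ∈ Icc 0 n, f (n - m) * g (m - 1) = truncConv f g (n - 1) := by
  have hshift : ∑ m ∈ Icc 0 n, f (n - m) * g (m - 1)
      = ∑ m ∈ Icc (-1) (n - 1), f (n - 1 - m) * g m := by
    refine sum_nbij' (· - 1) (· + 1) (fun m hm => ?_) (fun m hm => ?_)
      (fun m _ => sub_add_cancel m 1) (fun m _ => add_sub_cancel_right m 1)
      (fun m _ => by rw [sub_sub_sub_cancel_right])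
    all_goals simp only [mem_Icc] at hm ⊢; omega
  rw [hshift, truncConv]
  refine (sum_subset (Icc_subset_Icc (by norm_num) le_rfl) fun m hm hm0 => ?_).symm
  simp only [mem_Icc, not_and_or] at hm hm0
  rw [show m = -1 by omega, hg, mul_zero]

lemma truncConv_eq_of_rec_right {f g g' g'' : ℤ → R} {c : R}
    (hg : ∀ m, 0 ≤ m → g m = c * g' (m - 1) + g'' m) (hg' : g' (-1) = 0) (n : ℤ) :
    truncConv f g n = c * truncConv f g' (n - 1) + truncConv f g'' n := by
  rw [← sum_Icc_mul_shift f g' n hg', truncConv, truncConv, mul_sum, ← sum_add_distrib]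
  refine sum_congr rfl fun m hm => ?_
  rw [hg m (mem_Icc.mp hm).1]
  ring

lemma truncConv_eq_of_rec_left {f f' f'' g : ℤ → R} {c : R}
    (hf : ∀ m, 0 ≤ m → f m = c * f' (m - 1) + f'' m) (hf' : f' (-1) = 0) (n : ℤ) :
    truncConv f g n = c * truncConv f' g (n - 1) + truncConv f'' g n := by
  simp only [truncConv_comm _ g, truncConv_eq_of_rec_right hf hf']

theorem stmt4_general (Λ : ℤ → ℂ) (A σ V : ℤ → ℤ → ℂ)
    (hA3 : ∀ j : ℤ, 0 ≤ j → A j (-1) = 0)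
    (hA4 : ∀ j m : ℤ, 0 ≤ j → 0 ≤ m → A j m = j * A j (m - 1) + A (j - 1) m)
    (hσ2 : ∀ k : ℤ, -1 ≤ k → σ k (-1) = 0)
    (hσ4 : ∀ k m : ℤ, 0 ≤ k → 0 ≤ m → σ k m = Λ k * σ (k - 1) (m - 1) + σ (k - 1) m)
    (hV1 : ∀ k j : ℤ, k < j → V k j = 0)
    (hV2 : ∀ k j : ℤ, 0 ≤ k → -1 ≤ j → j ≤ k →
      V k j = ∑ m ∈ Finset.Icc 0 (k - j), A j (k - j - m) * σ (k - 1) m)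
    (k j : ℤ) (hk : 1 ≤ k) (hj : 0 ≤ j) :
    V k j = (Λ (k - 1) + j) * V (k - 1) j + V (k - 1) (j - 1) := by
  have hV : ∀ k j, 0 ≤ k → -1 ≤ j → V k j = truncConv (A j) (σ (k - 1)) (k - j) := by
    intro k j hk hj
    rcases lt_or_ge k j with hkj | hjk
    · rw [hV1 k j hkj, truncConv_of_neg _ _ (by omega)]
    · exact hV2 k j hk hj hjk
  rw [hV k j (by omega) (by omega), hV (k - 1) j (by omega) (by omega),
    hV (k - 1) (j - 1) (by omega) (by omega),
    truncConv_eq_of_rec_right (hσ4 (k - 1) · (by omega)) (hσ2 (k - 1 - 1) (by omega)),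
    truncConv_eq_of_rec_left (hA4 j · hj) (hA3 j hj) (k - j),
    show k - 1 - j = k - j - 1 by ring, show k - 1 - (j - 1) = k - j by ring]
  ring

/-- recurrence `V_{k,j} = (Λ_{k-1} + j) V_{k-1,j} + V_{k-1,j-1}`. -/
theorem stmt4 (Λ : ℤ → ℂ) (A σ V : ℤ → ℤ → ℂ)
    (hA1 : A (-1) 0 = 1)
    (hA2 : ∀ m : ℤ, 1 ≤ m → A (-1) m = 0)
    (hA3 : ∀ j : ℤ, 0 ≤ j → A j (-1) = 0)
    (hA4 : ∀ j m : ℤ, 0 ≤ j → 0 ≤ m → A j m = j * A j (m - 1) + A (j - 1) m)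
    (hσ1 : σ (-1) 0 = 1)
    (hσ2 : ∀ k : ℤ, -1 ≤ k → σ k (-1) = 0)
    (hσ3 : ∀ m : ℤ, 1 ≤ m → σ (-1) m = 0)
    (hσ4 : ∀ k m : ℤ, 0 ≤ k → 0 ≤ m → σ k m = Λ k * σ (k - 1) (m - 1) + σ (k - 1) m)
    (hV1 : ∀ k j : ℤ, k < j → V k j = 0)
    (hV2 : ∀ k j : ℤ, 0 ≤ k → -1 ≤ j → j ≤ k →
      V k j = ∑ m ∈ Finset.Icc 0 (k - j), A j (k - j - m) * σ (k - 1) m)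
    (k j : ℤ) (hk : 1 ≤ k) (hj : 0 ≤ j) :
    V k j = (Λ (k - 1) + j) * V (k - 1) j + V (k - 1) (j - 1) :=
  stmt4_general Λ A σ V hA3 hA4 hσ2 hσ4 hV1 hV2 k j hk hj
end

section
/- For α a positive integer and a a complex number, the α-th derivative of the function t ↦ e^{a/t} (for t > 0, or t in ℂ \ {0}) is given by d^α/dt^α (e^{a/t}) = (-1)^α Σ_{β=1}^{α} [α!(α-1)! / ((α-β)! β! (β-1)!)] · a^β · t^{-α-β} · e^{a/t}. -/
/-!
Every derivative of `f z = exp (a / z)` has the shape `(-1)ⁿ ∑ₖ L(n, k) aᵏ z^(-n-k) f z`, because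
`(zᵐ f)' = (m z^(m-1) - a z^(m-2)) f`. Comparing coefficients, `L` satisfies the Lah recurrence
`L(n+1, k) = (n + k) L(n, k) + L(n, k-1)`, whose solution is `L(n, k) = C(n-1, k-1) n! / k!`,
i.e. `n! (n-1)! / ((n-k)! k! (k-1)!)`.
-/

open Finset Nat

/-- The unsigned Lah numbers `L(n, k)`; the `k = 0` branch is the recurrence with `L(n, -1) = 0`. -/
def lah : ℕ → ℕ → ℕ
  | 0, k => if k = 0 then 1 else 0
  | n + 1, 0 => n * lah n 0
  | n + 1, k + 1 => (n + k + 1) * lah n (k + 1) + lah n k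

theorem lah_succ_zero (n : ℕ) : lah (n + 1) 0 = 0 := by
  induction n with
  | zero => rfl
  | succ n ih => rw [lah.eq_2, ih, mul_zero]

theorem lah_eq_zero_of_lt {n k : ℕ} (h : n < k) : lah n k = 0 := by
  induction n generalizing k with
  | zero => rw [lah.eq_1, if_neg h.ne']
  | succ n ih =>
    obtain ⟨k, rfl⟩ := Nat.exists_eq_succ_of_ne_zero (by omega : k ≠ 0)
    rw [lah.eq_3, ih (by omega), ih (by omega), mul_zero]

theorem lah_succ_succ_mul_factorial (n k : ℕ) :
    lah (n + 1) (k + 1) * (k + 1)! = n.choose k * (n + 1)! := by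
  induction n generalizing k with
  | zero => cases k <;> simp [lah]
  | succ n ih =>
    cases k with
    | zero =>
      have h0 : lah (n + 1) 1 = (n + 1)! := by simpa using ih 0
      rw [lah.eq_3, lah_succ_zero, h0, factorial_succ (n + 1)]
      simp
    | succ k =>
      rw [lah.eq_3, choose_succ_succ, factorial_succ (k + 1), factorial_succ (n + 1)]
      rcases le_or_gt k n with hkn | hnk
      · obtain ⟨d, rfl⟩ := Nat.exists_eq_add_of_le hkn
        have hpascal := Nat.choose_succ_right_eq (k + d) k
        rw [Nat.add_sub_cancel_left] at hpascal
        have h1 := ih (k + 1)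
        rw [factorial_succ (k + 1)] at h1
        linear_combination (k + d + k + 3) * h1 + (k + 2) * ih k + (k + d + 1)! * hpascal
      · rw [choose_eq_zero_of_lt hnk, choose_eq_zero_of_lt (by omega),
          lah_eq_zero_of_lt (by omega), lah_eq_zero_of_lt (by omega)]
        simp

theorem lah_eq_factorial_div {K : Type*} [Field K] [CharZero K] {n k : ℕ} (hk : 1 ≤ k)
    (hkn : k ≤ n) : (lah n k : K) = n ! * (n - 1)! / ((n - k)! * k ! * (k - 1)!) := by
  obtain ⟨j, rfl⟩ := Nat.exists_eq_add_of_le' hk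
  obtain ⟨m, rfl⟩ := Nat.exists_eq_add_of_le' (hk.trans hkn)
  have hjm : j ≤ m := by omega
  have key : lah (m + 1) (j + 1) * ((m - j)! * (j + 1)! * j !) = (m + 1)! * m ! := by
    rw [← choose_mul_factorial_mul_factorial hjm]
    linear_combination ((m - j)! * j !) * lah_succ_succ_mul_factorial m j
  simp only [Nat.add_sub_cancel, Nat.add_sub_add_right]
  rw [eq_div_iff (by simp [Nat.factorial_ne_zero])]
  exact_mod_cast key

theorem sum_range_lah_succ_mul {R : Type*} [CommSemiring R] (n : ℕ) (G : ℕ → R) :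
    ∑ k ∈ range (n + 2), (lah (n + 1) k : R) * G k =
      ∑ k ∈ range (n + 1), (lah n k : R) * ((n + k) * G k + G (k + 1)) := by
  have hextend : ∑ k ∈ range (n + 1), (lah n k : R) * ((n + k) * G k) =
      ∑ k ∈ range (n + 2), (lah n k : R) * ((n + k) * G k) := by
    rw [sum_range_succ _ (n + 1), lah_eq_zero_of_lt (lt_add_one n), Nat.cast_zero, zero_mul,
      add_zero]
  simp only [mul_add, sum_add_distrib, hextend]
  rw [sum_range_succ', sum_range_succ' _ (n + 1), lah.eq_2]
  simp only [lah.eq_3, Nat.cast_add, Nat.cast_mul, Nat.cast_one, Nat.cast_zero, add_zero]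
  have hterm : ∀ k ∈ range (n + 1), ((n + k + 1) * (lah n (k + 1) : R) + lah n k) * G (k + 1) =
      lah n (k + 1) * ((n + (k + 1)) * G (k + 1)) + lah n k * G (k + 1) := fun k _ => by ring
  rw [sum_congr rfl hterm, sum_add_distrib]
  ring

theorem hasDerivAt_zpow_mul_cexp_div (a : ℂ) {t : ℂ} (ht : t ≠ 0) (m : ℤ) :
    HasDerivAt (fun z => z ^ m * Complex.exp (a / z))
      ((m * t ^ (m - 1) - a * t ^ (m - 2)) * Complex.exp (a / t)) t := by
  have hdiv : HasDerivAt (fun z => a / z) (-(a / t ^ 2)) t := by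
    simpa [div_eq_mul_inv] using (hasDerivAt_inv ht).const_mul a
  refine ((hasDerivAt_zpow m t (.inl ht)).mul hdiv.cexp).congr_deriv ?_
  rw [zpow_sub₀ ht m 2, zpow_ofNat]
  ring

theorem hasDerivAt_lah_sum (a : ℂ) (n : ℕ) {t : ℂ} (ht : t ≠ 0) :
    HasDerivAt
      (fun z => (-1) ^ n * ∑ k ∈ range (n + 1),
        (lah n k : ℂ) * a ^ k * z ^ (-(n : ℤ) - k) * Complex.exp (a / z))
      ((-1) ^ (n + 1) * ∑ k ∈ range (n + 2),
        (lah (n + 1) k : ℂ) * a ^ k * t ^ (-(n + 1 : ℕ) - k : ℤ) * Complex.exp (a / t)) t := by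
  have hterm := fun k (_ : k ∈ range (n + 1)) =>
    (hasDerivAt_zpow_mul_cexp_div a ht (-(n : ℤ) - k)).const_mul ((lah n k : ℂ) * a ^ k)
  have hsum := (HasDerivAt.fun_sum hterm).const_mul ((-1 : ℂ) ^ n)
  simp only [← mul_assoc] at hsum
  refine hsum.congr_deriv ?_
  set G : ℕ → ℂ := fun k => a ^ k * t ^ (-(n + 1 : ℕ) - k : ℤ) * Complex.exp (a / t)
  calc _ = (-1) ^ (n + 1) * ∑ k ∈ range (n + 1), (lah n k : ℂ) * ((n + k) * G k + G (k + 1)) := by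
        rw [pow_succ, mul_assoc, neg_one_mul, ← sum_neg_distrib]
        congr 1
        refine sum_congr rfl fun k _ => ?_
        simp only [G]
        push_cast
        ring_nf
    _ = _ := by
        rw [← sum_range_lah_succ_mul]
        simp only [G, mul_assoc]

theorem iteratedDeriv_cexp_div (a : ℂ) (n : ℕ) {t : ℂ} (ht : t ≠ 0) :
    iteratedDeriv n (fun z => Complex.exp (a / z)) t =
      (-1) ^ n * ∑ k ∈ range (n + 1),
        (lah n k : ℂ) * a ^ k * t ^ (-(n : ℤ) - k) * Complex.exp (a / t) := by
  induction n generalizing t with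
  | zero => simp [lah]
  | succ n ih =>
    have hloc : iteratedDeriv n (fun z => Complex.exp (a / z)) =ᶠ[nhds t] _ :=
      Filter.eventually_of_mem (isOpen_ne.mem_nhds ht) fun z hz => ih hz
    rw [iteratedDeriv_succ, hloc.deriv_eq, (hasDerivAt_lah_sum a n ht).deriv]

/-- `α`-th derivative of `t ↦ exp (a / t)` away from `0`. -/
theorem stmt8 (α : ℕ) (hα : 1 ≤ α) (a : ℂ) (t : ℂ) (ht : t ≠ 0) :
    iteratedDeriv α (fun z : ℂ => Complex.exp (a / z)) t =
      (-1 : ℂ) ^ α * ∑ β ∈ Finset.Icc 1 α,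
        ((α.factorial : ℂ) * ((α - 1).factorial : ℂ) /
            (((α - β).factorial : ℂ) * (β.factorial : ℂ) * ((β - 1).factorial : ℂ))) *
          a ^ β * t ^ (-(α : ℤ) - (β : ℤ)) * Complex.exp (a / t) := by
  obtain ⟨n, rfl⟩ := Nat.exists_eq_add_of_le' hα
  rw [iteratedDeriv_cexp_div a _ ht, range_eq_Ico, sum_eq_sum_Ico_succ_bot (by omega),
    lah_succ_zero, Ico_add_one_right_eq_Icc, Nat.cast_zero, zero_mul, zero_mul, zero_mul, zero_add]
  congr 1
  refine sum_congr rfl fun k hk => ?_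
  obtain ⟨hk, hkn⟩ := mem_Icc.1 hk
  rw [lah_eq_factorial_div hk hkn]
end

section
/- Let Θ(t) = Σ_{l=1}^d (ε_{d+1}·t_1···t_d − ε_l·t_l^{-1})^2 for t ∈ (0,∞)^d, where each ε_l ∈ {1,-1}. If t ∈ (0,∞)^d lies outside the hypercube [1/4, 4]^d, then max over l of |ε_{d+1}·t_1···t_d − ε_l·t_l^{-1}| ≥ 1/4; consequently Θ(t) ≥ 1/16. -/
/-! Write `P = ∏ t_k`; since `|ε| = 1`, it suffices to find `i` with `|P - t_i⁻¹| ≥ 1/4`.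
If all these differences were smaller, then `t_l > 4` would force `P < 1/2`, hence every
`t_i⁻¹ < 3/4`, every `t_i ≥ 1` and `P ≥ 1`; symmetrically `t_l < 1/4` would force `P > 15/4`,
hence every `t_i⁻¹ > 7/2`, every `t_i ≤ 1` and `P ≤ 1`. -/

open Finset

section

variable {ι : Type*} [Fintype ι] {t : ι → ℝ}

lemma exists_quarter_le_abs_prod_sub_inv_of_four_lt (ht : ∀ i, 0 < t i) {l : ι} (hl : 4 < t l) :
    ∃ i, (1 / 4 : ℝ) ≤ |∏ k, t k - (t i)⁻¹| := by
  by_contra! h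
  have hl_inv : (t l)⁻¹ < 1 / 4 := by
    rw [inv_lt_comm₀ (ht l) (by norm_num)]; linarith
  have hP : ∏ k, t k < 1 / 2 := by linarith [(abs_lt.mp (h l)).2]
  have hone : ∀ i, 1 ≤ t i := fun i ↦
    (inv_lt_one₀ (ht i)).mp (by linarith [(abs_lt.mp (h i)).1]) |>.le
  linarith [Finset.one_le_prod (s := univ) fun i _ ↦ hone i]

lemma exists_quarter_le_abs_prod_sub_inv_of_lt_quarter (ht : ∀ i, 0 < t i) {l : ι}
    (hl : t l < 1 / 4) : ∃ i, (1 / 4 : ℝ) ≤ |∏ k, t k - (t i)⁻¹| := by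
  by_contra! h
  have hl_inv : 4 < (t l)⁻¹ := by
    rw [lt_inv_comm₀ (by norm_num) (ht l)]; linarith
  have hP : 15 / 4 < ∏ k, t k := by linarith [(abs_lt.mp (h l)).1]
  have hle : ∀ i, t i ≤ 1 := fun i ↦
    (one_lt_inv_iff₀.mp (by linarith [(abs_lt.mp (h i)).2])).2.le
  linarith [Finset.prod_le_one (s := univ) (fun i _ ↦ (ht i).le) fun i _ ↦ hle i]

theorem exists_quarter_le_abs_prod_sub_inv (ht : ∀ i, 0 < t i)
    (hout : ∃ l, t l ∉ Set.Icc (1 / 4 : ℝ) 4) : ∃ i, (1 / 4 : ℝ) ≤ |∏ k, t k - (t i)⁻¹| := by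
  obtain ⟨l, hl⟩ := hout
  rcases lt_or_ge (t l) (1 / 4) with hlow | hlow
  · exact exists_quarter_le_abs_prod_sub_inv_of_lt_quarter ht hlow
  · exact exists_quarter_le_abs_prod_sub_inv_of_four_lt ht (lt_of_not_ge fun h ↦ hl ⟨hlow, h⟩)

end

lemma abs_abs_sub_abs_le_abs_mul_sub_mul {a b : ℝ} (ha : |a| = 1) (hb : |b| = 1) (x y : ℝ) :
    |(|x| - |y|)| ≤ |a * x - b * y| := by
  simpa [abs_mul, ha, hb] using abs_abs_sub_abs_le_abs_sub (a * x) (b * y)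

/-- outside the hypercube `[1/4,4]^d` one has
`max_l |ε_{d+1} t_1⋯t_d − ε_l t_l⁻¹| ≥ 1/4`, hence `Θ(t) ≥ 1/16`. -/
theorem stmt15 (d : ℕ) (ε : Fin d → ℝ) (εn : ℝ)
    (hε : ∀ l, ε l = 1 ∨ ε l = -1) (hεn : εn = 1 ∨ εn = -1)
    (t : Fin d → ℝ) (ht : ∀ l, 0 < t l)
    (hout : ∃ l, t l ∉ Set.Icc (1 / 4 : ℝ) 4) :
    (∃ l, (1 / 4 : ℝ) ≤ |εn * ∏ k, t k - ε l * (t l)⁻¹|) ∧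
      (1 / 16 : ℝ) ≤ ∑ l, (εn * ∏ k, t k - ε l * (t l)⁻¹) ^ 2 := by
  obtain ⟨m, hm⟩ := exists_quarter_le_abs_prod_sub_inv ht hout
  have hsign : ∀ {a : ℝ}, a = 1 ∨ a = -1 → |a| = 1 := fun h ↦ (abs_eq zero_le_one).mpr h
  have hmain : (1 / 4 : ℝ) ≤ |εn * ∏ k, t k - ε m * (t m)⁻¹| := by
    calc (1 / 4 : ℝ) ≤ |∏ k, t k - (t m)⁻¹| := hm
      _ = |(|∏ k, t k| - |(t m)⁻¹|)| := by
        rw [abs_of_pos (prod_pos fun i _ ↦ ht i), abs_of_pos (inv_pos.mpr (ht m))]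
      _ ≤ _ := abs_abs_sub_abs_le_abs_mul_sub_mul (hsign hεn) (hsign (hε m)) _ _
  refine ⟨⟨m, hmain⟩, ?_⟩
  calc (1 / 16 : ℝ) = (1 / 4) ^ 2 := by norm_num
    _ ≤ (εn * ∏ k, t k - ε m * (t m)⁻¹) ^ 2 := by
      simpa only [sq_abs] using pow_le_pow_left₀ (by norm_num) hmain 2
    _ ≤ ∑ l, (εn * ∏ k, t k - ε l * (t l)⁻¹) ^ 2 :=
      single_le_sum (f := fun l ↦ (εn * ∏ k, t k - ε l * (t l)⁻¹) ^ 2)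
        (fun _ _ ↦ sq_nonneg _) (mem_univ m)
end

section
/- For every complex number ν with |Re ν| < 1 and every x > 0, one has ±πi·e^{±πiν/2}·H^{(1,2)}_ν(2x) = ∫_0^∞ t^{ν-1} e^{±ix(t + 1/t)} dt, where H^{(1)}_ν and H^{(2)}_ν are the Hankel functions, and the integral converges conditionally. -/
/-!
Substituting `t = e^r` turns `∫_{1/R}^{R} t^{ν-1} e^{c(t + 1/t)} dt` into
`∫_{-log R}^{log R} e^{νr} e^{2c cosh r} dr`, and folding the symmetric interval onto
`[0, log R]` replaces `e^{νr}` by `2 cosh(νr)`. So for every `R > 0` the truncated integral is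
exactly twice the truncated Hankel integral up to `log R`, and the limits agree.
-/

open Complex Filter intervalIntegral Set

theorem intervalIntegral.integral_inv_to_self_eq_integral_exp_smul
    {E : Type*} [NormedAddCommGroup E] [NormedSpace ℝ E] (f : ℝ → E) {R : ℝ} (hR : 0 < R) :
    ∫ t in R⁻¹..R, f t = ∫ r in -Real.log R..Real.log R, Real.exp r • f (Real.exp r) := by
  have := integral_deriv_smul_comp_of_deriv_nonneg (g := f) (a := -Real.log R) (b := Real.log R)
    Real.continuous_exp.continuousOn (fun r _ => Real.hasDerivAt_exp r)
    (fun r _ => (Real.exp_pos r).le)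
  rwa [Real.exp_neg, Real.exp_log hR, eq_comm] at this

theorem intervalIntegral.integral_neg_to_self_eq_integral_add_comp_neg
    {E : Type*} [NormedAddCommGroup E] [NormedSpace ℝ E] {h : ℝ → E} {L : ℝ}
    (hh : IntervalIntegrable h MeasureTheory.volume (-L) L) :
    ∫ r in -L..L, h r = ∫ r in 0..L, (h r + h (-r)) := by
  have hzero : (0 : ℝ) ∈ uIcc (-L) L := by
    rw [mem_uIcc]
    grind
  have hleft : IntervalIntegrable h MeasureTheory.volume (-L) 0 :=
    hh.mono_set (uIcc_subset_uIcc_left hzero)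
  have hright : IntervalIntegrable h MeasureTheory.volume 0 L :=
    hh.mono_set (uIcc_subset_uIcc_right hzero)
  have hleft' : IntervalIntegrable (fun r => h (-r)) MeasureTheory.volume 0 L := by
    simpa using ((IntervalIntegrable.iff_comp_neg (f := h)).mp hleft).symm
  rw [integral_add hright hleft', integral_comp_neg, neg_zero, add_comm,
    integral_add_adjacent_intervals hleft hright]

theorem Complex.ofReal_exp_cpow (r : ℝ) (ν : ℂ) :
    ((Real.exp r : ℝ) : ℂ) ^ ν = exp (ν * r) := by
  rw [cpow_def_of_ne_zero (by exact_mod_cast (Real.exp_pos r).ne'),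
    ← ofReal_log (Real.exp_pos r).le, Real.log_exp, mul_comm]

theorem exp_smul_cpow_mul_exp_add_inv (ν c : ℂ) (r : ℝ) :
    Real.exp r • (((Real.exp r : ℝ) : ℂ) ^ (ν - 1) *
        exp (c * (Real.exp r + ((Real.exp r : ℝ) : ℂ)⁻¹)))
      = exp (2 * c * Real.cosh r) * exp (ν * r) := by
  rw [real_smul, ofReal_exp_cpow, ← ofReal_inv, ← Real.exp_neg, ofReal_cosh, Complex.cosh]
  push_cast
  rw [← exp_add, ← exp_add, ← exp_add]
  congr 1
  ring

theorem integral_cpow_mul_exp_add_inv_eq (ν c : ℂ) {R : ℝ} (hR : 0 < R) :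
    ∫ t in R⁻¹..R, (t : ℂ) ^ (ν - 1) * exp (c * (t + (t : ℂ)⁻¹))
      = 2 * ∫ r in 0..Real.log R, exp (2 * c * Real.cosh r) * cosh (ν * r) := by
  have hcont : Continuous fun r : ℝ => exp (2 * c * Real.cosh r) * exp (ν * r) := by fun_prop
  rw [integral_inv_to_self_eq_integral_exp_smul _ hR]
  simp_rw [exp_smul_cpow_mul_exp_add_inv]
  rw [integral_neg_to_self_eq_integral_add_comp_neg (hcont.intervalIntegrable _ _),
    ← integral_const_mul]
  refine integral_congr fun r _ => ?_
  simp only [Real.cosh_neg, ofReal_neg, mul_neg, Complex.cosh]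
  ring

theorem stmt17_general (ν : ℂ) (x : ℝ)
    (σ : ℂ) (H : ℂ)
    (hH : Filter.Tendsto
      (fun R : ℝ => ∫ r in (0 : ℝ)..R,
        Complex.exp (σ * Complex.I * (2 * x) * Real.cosh r) * Complex.cosh (ν * r))
      Filter.atTop
      (nhds (σ * (Real.pi * Complex.I) * Complex.exp (σ * Real.pi * Complex.I * ν / 2) * H / 2))) :
    Filter.Tendsto
      (fun R : ℝ => ∫ t in R⁻¹..R,
        (t : ℂ) ^ (ν - 1) * Complex.exp (σ * Complex.I * x * (t + (t : ℂ)⁻¹)))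
      Filter.atTop
      (nhds (σ * Real.pi * Complex.I * Complex.exp (σ * Real.pi * Complex.I * ν / 2) * H)) := by
  have hlim := (hH.comp Real.tendsto_log_atTop).const_mul (2 : ℂ)
  rw [mul_div_cancel₀ _ two_ne_zero, ← mul_assoc σ] at hlim
  refine hlim.congr' ?_
  filter_upwards [eventually_gt_atTop 0] with R hR
  rw [Function.comp_apply, integral_cpow_mul_exp_add_inv_eq ν _ hR]
  ring_nf

/-- for `|Re ν| < 1`, `x > 0` and either sign `σ = ±1`, if `H` denotes the
Hankel function value `H^{(1,2)}_ν(2x)` — characterized by the (conditionally convergent)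
integral representation
`∫_0^∞ e^{±i(2x)cosh r} cosh(νr) dr = ±(πi/2)·e^{±πiν/2}·H` — then
`±πi·e^{±πiν/2}·H = ∫_0^∞ t^{ν-1} e^{±ix(t+1/t)} dt`, the right-hand integral being
improper (conditionally convergent) at both `0` and `∞`. -/
theorem stmt17 (ν : ℂ) (hν : |ν.re| < 1) (x : ℝ) (hx : 0 < x)
    (σ : ℂ) (hσ : σ = 1 ∨ σ = -1) (H : ℂ)
    (hH : Filter.Tendsto
      (fun R : ℝ => ∫ r in (0 : ℝ)..R,
        Complex.exp (σ * Complex.I * (2 * x) * Real.cosh r) * Complex.cosh (ν * r))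
      Filter.atTop
      (nhds (σ * (Real.pi * Complex.I) * Complex.exp (σ * Real.pi * Complex.I * ν / 2) * H / 2))) :
    Filter.Tendsto
      (fun R : ℝ => ∫ t in R⁻¹..R,
        (t : ℂ) ^ (ν - 1) * Complex.exp (σ * Complex.I * x * (t + (t : ℂ)⁻¹)))
      Filter.atTop
      (nhds (σ * Real.pi * Complex.I * Complex.exp (σ * Real.pi * Complex.I * ν / 2) * H)) :=
  stmt17_general ν x σ H hH
end

section
/- For all nonnegative integers m and complex numbers ν, the combinatorial identity (-1)^m·(1/2 − ν)_m·(1/2 + ν)_m / m! = (1−ν)_{2m}/m! + Σ_{r=1}^{2m} [(-1)^r (2m+2r)! / (4^r (m+r)! r!)] · Σ_{α=0}^{2m−r} C(2m−α−1, r−1) · (1−ν)_α / α! holds, where (ν)_α = ν(ν+1)···(ν+α−1) is the rising factorial (Pochhammer symbol). -/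
/-!
Every piece of the identity is a generalized binomial coefficient `Ring.choose x k` over `ℂ`,
up to the common factor `(2m)!/m!`. The left side is `(2m)!/m! · C(m - 1/2 - ν, 2m)`, since the
falling product of length `2m` starting at `m - 1/2 - ν` splits into `(1/2 - ν)_m` and
`(-1)^m (1/2 + ν)_m`. By Legendre's duplication `(2n)! = 4^n n! (1/2)_n`, the coefficient of the
`r`-th term is `(2m)!/m! · C(-m - 1/2, r)`. The inner sum is a Chu–Vandermonde convolution of
multiset coefficients `C(r + j - 1, j)` and `(1 - ν)_α / α!`, and equals `C(2m - ν, 2m - r)`,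
which for `r = 0` is also the first term. Chu–Vandermonde in `r` then collapses the right side to
`(2m)!/m! · C((-m - 1/2) + (2m - ν), 2m)`.
-/

open Finset

namespace Ring

variable {R : Type*} [CommRing R] [BinomialRing R]

theorem choose_neg_eq_neg_one_pow_mul_multichoose (r : R) (n : ℕ) :
    choose (-r) n = (-1) ^ n * multichoose r n := by
  rw [choose_neg', Units.smul_def, zsmul_eq_mul, Int.cast_negOnePow_natCast]

theorem multichoose_add (r s : R) (k : ℕ) :
    multichoose (r + s) k =
      ∑ ij ∈ antidiagonal k, multichoose r ij.1 * multichoose s ij.2 := by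
  have h := add_choose_eq k (Commute.all (-r) (-s))
  rw [← neg_add, choose_neg_eq_neg_one_pow_mul_multichoose] at h
  have hsign : ∀ ij ∈ antidiagonal k, choose (-r) ij.1 * choose (-s) ij.2 =
      (-1) ^ k * (multichoose r ij.1 * multichoose s ij.2) := by
    intro ij hij
    rw [choose_neg_eq_neg_one_pow_mul_multichoose, choose_neg_eq_neg_one_pow_mul_multichoose,
      ← mem_antidiagonal.1 hij, pow_add]
    ring
  rw [sum_congr rfl hsign, ← mul_sum] at h
  exact ((isUnit_neg_one (α := R)).pow k).mul_left_cancel h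

theorem choose_add_eq_sum_range (r s : R) (n : ℕ) :
    choose (r + s) n = ∑ k ∈ range (n + 1), choose r k * choose s (n - k) := by
  rw [add_choose_eq n (Commute.all r s), Nat.sum_antidiagonal_eq_sum_range_succ_mk]

theorem multichoose_natCast_add_one (n k : ℕ) :
    multichoose ((n + 1 : ℕ) : R) k = (n + k).choose k := by
  rw [multichoose_eq, ← choose_natCast]
  push_cast
  ring_nf

end Ring

theorem ascPochhammer_eval_eq_prod_range {R : Type*} [CommSemiring R] (n : ℕ) (x : R) :
    (ascPochhammer R n).eval x = ∏ i ∈ range n, (x + i) := by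
  induction n with
  | zero => simp
  | succ n ih => rw [ascPochhammer_succ_eval, ih, prod_range_succ]

theorem prod_range_two_mul_sub_add {R : Type*} [CommRing R] (a b : R) (hab : a + b = 1) (m : ℕ) :
    ∏ i ∈ range (2 * m), (a - m + i) =
      (-1) ^ m * (∏ i ∈ range m, (a + i)) * ∏ i ∈ range m, (b + i) := by
  have hlow : ∏ i ∈ range m, (a - m + i) = (-1) ^ m * ∏ i ∈ range m, (b + i) :=
    calc ∏ i ∈ range m, (a - m + i) = ∏ i ∈ range m, -(b + i) := by
          rw [← prod_range_reflect]
          refine prod_congr rfl fun i hi => ?_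
          rw [Nat.cast_sub (by grind), Nat.cast_sub (by grind)]
          linear_combination hab
      _ = _ := by rw [prod_neg, card_range]
  have hhigh : ∏ i ∈ range m, (a - m + (m + i : ℕ)) = ∏ i ∈ range m, (a + i) :=
    prod_congr rfl fun i _ => by push_cast; ring
  rw [two_mul, prod_range_add, hlow, hhigh]
  ring

section Field

variable {K : Type*} [Field K] [CharZero K]

theorem Ring.multichoose_eq_prod_range_div (x : K) (k : ℕ) :
    multichoose x k = (∏ i ∈ range k, (x + i)) / k.factorial := by
  rw [eq_div_iff (Nat.cast_ne_zero.2 k.factorial_ne_zero), mul_comm, ← nsmul_eq_mul,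
    factorial_nsmul_multichoose_eq_ascPochhammer, Polynomial.ascPochhammer_smeval_eq_eval,
    ascPochhammer_eval_eq_prod_range]

theorem factorial_two_mul_eq_four_pow_mul_prod_half (n : ℕ) :
    ((2 * n).factorial : K) = 4 ^ n * n.factorial * ∏ i ∈ range n, (1 / 2 + i : K) := by
  induction n with
  | zero => simp
  | succ n ih =>
    rw [show 2 * (n + 1) = 2 * n + 1 + 1 by ring, Nat.factorial_succ, Nat.factorial_succ,
      Nat.factorial_succ, prod_range_succ]
    push_cast
    rw [ih]
    field_simp
    ring

theorem neg_one_pow_mul_factorial_div_eq_choose (m r : ℕ) :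
    (-1 : K) ^ r * (2 * m + 2 * r).factorial / (4 ^ r * (m + r).factorial * r.factorial) =
      (2 * m).factorial / m.factorial * Ring.choose (-((m : K) + 1 / 2)) r := by
  have hsplit : ∏ i ∈ range (m + r), (1 / 2 + i : K) =
      (∏ i ∈ range m, (1 / 2 + i : K)) * ∏ i ∈ range r, ((m : K) + 1 / 2 + i) := by
    rw [prod_range_add]
    congr 1
    exact prod_congr rfl fun i _ => by push_cast; ring
  have hf (n : ℕ) : (n.factorial : K) ≠ 0 := Nat.cast_ne_zero.2 n.factorial_ne_zero
  rw [Ring.choose_neg_eq_neg_one_pow_mul_multichoose, Ring.multichoose_eq_prod_range_div,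
    ← mul_add, factorial_two_mul_eq_four_pow_mul_prod_half,
    factorial_two_mul_eq_four_pow_mul_prod_half, hsplit, pow_add]
  field_simp [hf (m + r), hf r, hf m]

theorem sum_choose_mul_prod_range_div_eq_choose (n r : ℕ) (hr : 1 ≤ r) (hrn : r ≤ n) (y : K) :
    ∑ α ∈ range (n - r + 1),
        ((n - α - 1).choose (r - 1) : K) * (∏ i ∈ range α, (y + i)) / α.factorial =
      Ring.choose (y + n - 1) (n - r) := by
  obtain ⟨s, rfl⟩ : ∃ s, r = s + 1 := ⟨r - 1, by omega⟩
  obtain ⟨N, rfl⟩ : ∃ N, n = s + 1 + N := ⟨n - (s + 1), by omega⟩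
  have hN : s + 1 + N - (s + 1) = N := by omega
  have hupper : y + ((s + 1 + N : ℕ) : K) - 1 = y + ((s + 1 : ℕ) : K) + N - 1 := by
    push_cast; ring
  rw [hN, Nat.add_sub_cancel, hupper, ← Ring.multichoose_eq, Ring.multichoose_add,
    Nat.sum_antidiagonal_eq_sum_range_succ_mk]
  refine sum_congr rfl fun α hα => ?_
  have hα : α ≤ N := Nat.lt_succ_iff.1 (mem_range.1 hα)
  rw [show s + 1 + N - α - 1 = s + (N - α) by omega, Nat.choose_symm_add,
    Ring.multichoose_natCast_add_one, Ring.multichoose_eq_prod_range_div]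
  ring

theorem neg_one_pow_mul_prod_mul_prod_eq_factorial_mul_choose (a b : K) (hab : a + b = 1)
    (m : ℕ) :
    (-1) ^ m * (∏ i ∈ range m, (a + i)) * ∏ i ∈ range m, (b + i) =
      (2 * m).factorial * Ring.choose (a + m - 1) (2 * m) := by
  have hshift : a + m - 1 - ((2 * m : ℕ) : K) + 1 = a - m := by push_cast; ring
  rw [Ring.choose, Ring.multichoose_eq_prod_range_div, hshift, prod_range_two_mul_sub_add a b hab,
    mul_div_cancel₀ _ (Nat.cast_ne_zero.2 (2 * m).factorial_ne_zero)]

end Field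

/-- combinatorial identity for the Pochhammer (rising factorial) symbols. -/
theorem stmt19 (m : ℕ) (ν : ℂ) :
    (-1 : ℂ) ^ m * (∏ i ∈ Finset.range m, (1 / 2 - ν + i)) *
        (∏ i ∈ Finset.range m, (1 / 2 + ν + i)) / (m.factorial : ℂ) =
      (∏ i ∈ Finset.range (2 * m), (1 - ν + i)) / (m.factorial : ℂ) +
        ∑ r ∈ Finset.Icc 1 (2 * m),
          ((-1 : ℂ) ^ r * ((2 * m + 2 * r).factorial : ℂ) /
              ((4 : ℂ) ^ r * ((m + r).factorial : ℂ) * (r.factorial : ℂ))) *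
            ∑ α ∈ Finset.range (2 * m - r + 1),
              ((2 * m - α - 1).choose (r - 1) : ℂ) *
                (∏ i ∈ Finset.range α, (1 - ν + i)) / (α.factorial : ℂ) := by
  have hupper : 1 / 2 - ν + m - 1 = -((m : ℂ) + 1 / 2) + (1 - ν + ((2 * m : ℕ) : ℂ) - 1) := by
    push_cast; ring
  rw [neg_one_pow_mul_prod_mul_prod_eq_factorial_mul_choose _ (1 / 2 + ν) (by ring),
    mul_div_right_comm, hupper, Ring.choose_add_eq_sum_range, mul_sum,
    sum_range_eq_add_Ico _ (by omega), Ico_add_one_right_eq_Icc]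
  congr 1
  · rw [Ring.choose_zero_right, Nat.sub_zero, ← Ring.multichoose_eq,
      Ring.multichoose_eq_prod_range_div, one_mul, div_mul_div_comm, mul_comm (m.factorial : ℂ),
      mul_div_mul_left _ _ (Nat.cast_ne_zero.2 (2 * m).factorial_ne_zero)]
  · refine sum_congr rfl fun r hr => ?_
    rw [neg_one_pow_mul_factorial_div_eq_choose,
      sum_choose_mul_prod_range_div_eq_choose _ _ (mem_Icc.1 hr).1 (mem_Icc.1 hr).2]
    ring
end
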